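/- If G is a weak framework for a matroid M and X ⊆ E(M), then G[X] is a weak framework for the restriction M|X. -/

import Mathlib

open Set Matroid
open scoped Classical

namespace QuasiGraphicPaper

universe u v

/-- A finite multigraph: a set `V` of vertices (in an ambient type `α`), a set `E` of
edges (in an ambient type `β`), and an incidence function assigning to each edge an
unordered pair of endpoints; loop-edges and parallel edges are allowed. -/
structure Graph (α : Type u) (β : Type v) where
  V : Set α
  E : Set β
  ends : β → Sym2 α
  finV : V.Finite
  finE : E.Finite
  ends_mem : ∀ ⦃e⦄, e ∈ E → ∀ ⦃x⦄, x ∈ ends e → x ∈ V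

namespace Graph

variable {α : Type u} {β : Type v}

/-- `e` is a loop-edge of `G` at the vertex `v`. -/
def IsLoopAt (G : Graph α β) (e : β) (v : α) : Prop :=
  e ∈ G.E ∧ G.ends e = Sym2.diag v

/-- `loops_G(v)`: the set of loop-edges of `G` at `v`. -/
def loopsAt (G : Graph α β) (v : α) : Set β := {e | G.IsLoopAt e v}

/-- Two vertices are adjacent if some edge of `G` has them as its two endpoints. -/
def Adj (G : Graph α β) (u v : α) : Prop := ∃ e ∈ G.E, G.ends e = s(u, v)

/-- A graph is connected if any two of its vertices are joined by a walk.
(The graph with no vertices is connected.) -/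
def Connected (G : Graph α β) : Prop :=
  ∀ u ∈ G.V, ∀ v ∈ G.V, Relation.ReflTransGen G.Adj u v

/-- Delete a set `X` of vertices: remove the vertices in `X` and all edges meeting `X`. -/
def deleteVertices (G : Graph α β) (X : Set α) : Graph α β where
  V := G.V \ X
  E := {e ∈ G.E | ∀ x ∈ G.ends e, x ∉ X}
  ends := G.ends
  finV := G.finV.sdiff
  finE := G.finE.subset (sep_subset _ _)
  ends_mem := fun e he x hx => ⟨G.ends_mem he.1 hx, he.2 x hx⟩

/-- `G − v`: delete the single vertex `v`. -/
abbrev deleteVertex (G : Graph α β) (v : α) : Graph α β := G.deleteVertices {v}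

/-- `G − e`: delete the edge `e` (keeping all vertices). -/
def deleteEdge (G : Graph α β) (e : β) : Graph α β where
  V := G.V
  E := G.E \ {e}
  ends := G.ends
  finV := G.finV
  finE := G.finE.sdiff
  ends_mem := fun f hf x hx => G.ends_mem hf.1 hx

/-- `G[X]`: the subgraph of `G` with edge set `X` (intersected with `E(G)`) and
no isolated vertices. -/
def restrictEdges (G : Graph α β) (X : Set β) : Graph α β where
  V := {v | ∃ e ∈ X ∩ G.E, v ∈ G.ends e}
  E := X ∩ G.E
  ends := G.ends
  finV := G.finV.subset (by rintro v ⟨e, ⟨-, he⟩, hv⟩; exact G.ends_mem he hv)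
  finE := G.finE.subset inter_subset_right
  ends_mem := fun e he x hx => ⟨e, he, hx⟩

/-- The connected component of `G` containing the vertex `v`, as a graph. -/
def componentOf (G : Graph α β) (v : α) : Graph α β where
  V := {u ∈ G.V | Relation.ReflTransGen G.Adj v u}
  E := {e ∈ G.E | ∀ x ∈ G.ends e, Relation.ReflTransGen G.Adj v x}
  ends := G.ends
  finV := G.finV.subset (sep_subset _ _)
  finE := G.finE.subset (sep_subset _ _)
  ends_mem := fun e he x hx => ⟨G.ends_mem he.1 hx, he.2 x hx⟩

/-- `H` is a connected component of `G`. -/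
def IsComponentOf (H G : Graph α β) : Prop := ∃ v ∈ G.V, H = G.componentOf v

/-- The number of connected components of `G`. -/
noncomputable def ncomponents (G : Graph α β) : ℕ :=
  {H : Graph α β | H.IsComponentOf G}.ncard

/-- `G` has at most two connected components: among any three vertices, two are joined. -/
def AtMostTwoComponents (G : Graph α β) : Prop :=
  ∀ u ∈ G.V, ∀ v ∈ G.V, ∀ w ∈ G.V,
    Relation.ReflTransGen G.Adj u v ∨ Relation.ReflTransGen G.Adj u w ∨
      Relation.ReflTransGen G.Adj v w

/-- The degree of a vertex: loop-edges count twice. -/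
noncomputable def degree (G : Graph α β) (v : α) : ℕ :=
  ({e ∈ G.E | v ∈ G.ends e ∧ ¬ (G.ends e).IsDiag}).ncard +
    2 * ({e ∈ G.E | G.ends e = Sym2.diag v}).ncard

/-- `G` is a cycle: it is connected, has at least one edge, and every vertex has
degree two. -/
def IsCycleGraph (G : Graph α β) : Prop :=
  G.E.Nonempty ∧ G.Connected ∧ ∀ v ∈ G.V, G.degree v = 2

/-- `C` is (the edge set of) a cycle of `G`. -/
def CycleSet (G : Graph α β) (C : Set β) : Prop :=
  C ⊆ G.E ∧ (G.restrictEdges C).IsCycleGraph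

/-- A forest: a graph with no cycles (in particular no loop-edges). -/
def IsForest (G : Graph α β) : Prop := ∀ C, ¬ G.CycleSet C

/-- `H` is a subgraph of `G`. -/
def IsSubgraph (H G : Graph α β) : Prop := H.V ⊆ G.V ∧ H.E ⊆ G.E ∧ H.ends = G.ends

/-- `G` is `k`-connected if `G − X` is connected for every vertex set `X` with `|X| < k`. -/
def KConnected (G : Graph α β) (k : ℕ) : Prop :=
  ∀ X : Set α, X.encard < k → (G.deleteVertices X).Connected

/-- A theta: a `2`-connected graph with exactly two vertices of degree three, all
other vertices having degree two. -/
def IsTheta (H : Graph α β) : Prop :=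
  H.KConnected 2 ∧
    ∃ a ∈ H.V, ∃ b ∈ H.V, a ≠ b ∧ H.degree a = 3 ∧ H.degree b = 3 ∧
      ∀ v ∈ H.V, v ≠ a → v ≠ b → H.degree v = 2

/-- `G / e`: contract the non-loop edge `e` with endpoints `x` and `y`
(identifying `y` with `x` and deleting `e`). -/
noncomputable def contractEdge (G : Graph α β) (e : β) (x y : α) (he : e ∈ G.E)
    (hxy : G.ends e = s(x, y)) (hne : x ≠ y) : Graph α β where
  V := G.V \ {y}
  E := G.E \ {e}
  ends := fun f => (G.ends f).map (fun w => if w = y then x else w)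
  finV := G.finV.sdiff
  finE := G.finE.sdiff
  ends_mem := by
    rintro f ⟨hf, -⟩ z hz
    rw [Sym2.mem_map] at hz
    obtain ⟨w, hw, rfl⟩ := hz
    by_cases hwy : w = y
    · rw [if_pos hwy]
      have hx : x ∈ G.ends e := by rw [hxy]; exact Sym2.mem_mk_left x y
      exact ⟨G.ends_mem he hx, by simp [hne]⟩
    · rw [if_neg hwy]
      exact ⟨G.ends_mem hf hw, by simp [hwy]⟩

/-- `G ∘ e`: for a loop-edge `e` at a vertex `v` which is the unique loop-edge at `v`,
delete `v` and `e`, and replace every other edge `f = vw` at `v` by a loop-edge at `w`. -/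
noncomputable def circ (G : Graph α β) (e : β) (v : α)
    (hno : ∀ f ∈ G.E, G.ends f = Sym2.diag v → f = e) : Graph α β where
  V := G.V \ {v}
  E := G.E \ {e}
  ends := fun f =>
    if h : f ∈ G.E ∧ f ≠ e ∧ v ∈ G.ends f then Sym2.diag (Sym2.Mem.other h.2.2)
    else G.ends f
  finV := G.finV.sdiff
  finE := G.finE.sdiff
  ends_mem := by
    rintro f ⟨hf, hfe⟩ z hz
    have hfe' : f ≠ e := fun h' => hfe (by simp [h'])
    by_cases h : f ∈ G.E ∧ f ≠ e ∧ v ∈ G.ends f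
    · rw [dif_pos h] at hz
      have hze : z = Sym2.Mem.other h.2.2 := by
        have h2 : z ∈ s(Sym2.Mem.other h.2.2, Sym2.Mem.other h.2.2) := hz
        rw [Sym2.mem_iff] at h2
        tauto
      subst hze
      refine ⟨G.ends_mem hf (Sym2.other_mem h.2.2), ?_⟩
      simp only [mem_singleton_iff]
      intro hzv
      apply h.2.1
      apply hno f hf
      show G.ends f = s(v, v)
      rw [← Sym2.other_spec h.2.2, hzv]
    · rw [dif_neg h] at hz
      refine ⟨G.ends_mem hf hz, ?_⟩
      simp only [mem_singleton_iff]
      intro hzv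
      subst hzv
      exact h ⟨hf, hfe', hz⟩

end Graph

/-! ### Matroid notions -/

variable {α : Type u} {β : Type v}

/-- The rank `r_M(X)` of a set `X` in a matroid `M`: the maximum size of an
independent subset of `X`. -/
noncomputable def rank (M : Matroid β) (X : Set β) : ℕ :=
  (⨆ I ∈ {I : Set β | M.Indep I ∧ I ⊆ X}, I.encard).toNat

/-- `C` is a circuit of `M` : a minimal dependent set. -/
def IsCircuit (M : Matroid β) (C : Set β) : Prop :=
  M.Dep C ∧ ∀ D, D ⊂ C → M.Indep D

/-- `M \ D` : delete the set `D` from the matroid `M`. -/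
def deleteM (M : Matroid β) (D : Set β) : Matroid β := M ↾ (M.E \ D)

/-- `M / C` : contract the set `C` in the matroid `M`. -/
def contractM (M : Matroid β) (C : Set β) : Matroid β := (M✶ ↾ (M✶.E \ C))✶

/-- `G` is a weak framework for `M`: conditions (1)–(3). -/
def WeakFramework (G : Graph α β) (M : Matroid β) : Prop :=
  G.E = M.E ∧
  (∀ H : Graph α β, H.IsComponentOf G → rank M H.E ≤ H.V.ncard) ∧
  (∀ v ∈ G.V,
    M.closure (G.deleteVertex v).E ⊆ (G.deleteVertex v).E ∪ G.loopsAt v)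

/-- `G` is a framework for `M`: conditions (1)–(4). -/
def Framework (G : Graph α β) (M : Matroid β) : Prop :=
  WeakFramework G M ∧
    ∀ C, IsCircuit M C → (G.restrictEdges C).AtMostTwoComponents

/-- `M` is the cycle matroid `M(G)` of `G` : the ground set of `M` is `E(G)`, and the
circuits of `M` are exactly the edge sets of cycles of `G`. -/
def IsCycleMatroidOf (G : Graph α β) (M : Matroid β) : Prop :=
  M.E = G.E ∧ ∀ C, IsCircuit M C ↔ G.CycleSet C

/-- A matroid is graphic if it is the cycle matroid of some graph. -/
def Graphic (M : Matroid β) : Prop :=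
  ∃ (γ : Type v) (G : Graph γ β), IsCycleMatroidOf G M

/-- A matroid is quasi-graphic if it has a framework. -/
def QuasiGraphic (M : Matroid β) : Prop :=
  ∃ (γ : Type v) (G : Graph γ β), Framework G M

/-- `M` is a lift of `N` if some single-element extension `M'` of `M` satisfies
`M' \ e = M` and `M' / e = N`. -/
def IsLiftOf (M N : Matroid β) : Prop :=
  ∃ M' : Matroid (Option β), (none : Option β) ∈ M'.E ∧
    deleteM M' {none} = M.map some (Option.some_injective β).injOn ∧
    contractM M' {none} = N.map some (Option.some_injective β).injOn

/-- `M` is a lifted-graphic matroid: for some single-element extension `M'` of `M`,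
`M' / e` is graphic. -/
def LiftedGraphic (M : Matroid β) : Prop :=
  ∃ M' : Matroid (Option β), (none : Option β) ∈ M'.E ∧
    deleteM M' {none} = M.map some (Option.some_injective β).injOn ∧
    Graphic (contractM M' {none})

/-- `(M, V)` is a framed matroid: `V` is a basis of `M` and every element of `M` is
spanned by a subset of `V` with at most two elements. -/
def FramedMatroid {γ : Type u} (M : Matroid γ) (V : Set γ) : Prop :=
  M.IsBase V ∧ ∀ e ∈ M.E, ∃ S ⊆ V, S.ncard ≤ 2 ∧ e ∈ M.closure S

/-- `M` is a frame matroid: `M = M' \ V` for some framed matroid `(M', V)`. -/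
def FrameMatroid (M : Matroid β) : Prop :=
  ∃ (γ : Type v) (M' : Matroid (β ⊕ γ)) (V : Set (β ⊕ γ)),
    FramedMatroid M' V ∧
      deleteM M' V = M.map Sum.inl Sum.inl_injective.injOn

/-- `M` is `3`-connected: it has no `k`-separation for `k ≤ 2`. -/
def ThreeConnected (M : Matroid β) : Prop :=
  ∀ X ⊆ M.E, ∀ k : ℕ, k ≤ 2 → (k : ℕ∞) ≤ X.encard → (k : ℕ∞) ≤ (M.E \ X).encard →
    rank M M.E + k ≤ rank M X + rank M (M.E \ X)

/-- `M` is representable over some field. -/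
def Representable (M : Matroid β) : Prop :=
  ∃ (F : Type v) (_ : Field F) (W : Type v) (_ : AddCommGroup W) (_ : Module F W)
    (φ : β → W), ∀ I ⊆ M.E, (M.Indep I ↔ LinearIndependent F (fun x : I => φ x))

/-- A collection `B` of cycles of `G` satisfies the theta-property if there is no
theta-subgraph of `G` with exactly two of its three cycles in `B`. -/
def ThetaProperty (G : Graph α β) (B : Set (Set β)) : Prop :=
  ∀ H : Graph α β, H.IsSubgraph G → H.IsTheta →
    ∀ C1 C2 C3, H.CycleSet C1 → H.CycleSet C2 → H.CycleSet C3 →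
      C1 ≠ C2 → C2 ≠ C3 → C1 ≠ C3 → C1 ∈ B → C2 ∈ B → C3 ∈ B

/-!
Restricting `M` to `X` only shrinks closures, so condition (3) passes from `G` to `G[X]`.
For condition (2), let `H` be a component of `G[X]`, inside the component `K` of `G`. Grow
`V(H)` to `V(K)` one vertex `u` at a time, along an edge `wu` whose end `w` is already reached:
by condition (3) at `u`, the non-loop edge `wu` is not spanned by the edges with both ends in
the current vertex set `W`, so each new vertex raises the rank of the induced edge set by one.
Hence `r(E[V(H)]) + |V(K) \ V(H)| ≤ r(E(K)) ≤ |V(K)|`, that is `r(E(H)) ≤ |V(H)|`.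
-/

theorem _root_.Relation.ReflTransGen.exists_rel_mem_notMem {γ : Type*} {r : γ → γ → Prop}
    {S : Set γ} {a b : γ} (hab : Relation.ReflTransGen r a b) (ha : a ∈ S) (hb : b ∉ S) :
    ∃ c ∈ S, ∃ d ∉ S, r c d := by
  induction hab with
  | refl => exact absurd ha hb
  | @tail c d _ hcd ih =>
    by_cases hc : c ∈ S
    · exact ⟨c, hc, d, hb, hcd⟩
    · exact ih hc

lemma rank_eq_toNat_eRk (M : Matroid β) (X : Set β) : rank M X = (M.eRk X).toNat := by
  obtain ⟨I, hI⟩ := M.exists_isBasis' X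
  rw [rank]
  congr 1
  refine le_antisymm (iSup₂_le fun J hJ => hJ.1.encard_le_eRk_of_subset hJ.2) ?_
  rw [← hI.encard_eq_eRk]
  exact le_iSup₂_of_le I ⟨hI.indep, hI.subset⟩ le_rfl

lemma rank_le_iff_eRk_le {M : Matroid β} {X : Set β} (hX : X.Finite) {n : ℕ} :
    rank M X ≤ n ↔ M.eRk X ≤ n := by
  rw [rank_eq_toNat_eRk, ← ENat.natCast_le_natCast,
    ENat.natCast_toNat (M.isRkFinite_of_finite hX).eRk_lt_top.ne]

namespace Graph

variable {G : Graph α β}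

def inducedEdgeSet (G : Graph α β) (W : Set α) : Set β := {e ∈ G.E | ∀ x ∈ G.ends e, x ∈ W}

lemma Adj.right_mem {u v : α} (h : G.Adj u v) : v ∈ G.V :=
  let ⟨_, he, hends⟩ := h
  G.ends_mem he (hends ▸ Sym2.mem_mk_right u v)

lemma inducedEdgeSet_mono {W W' : Set α} (hW : W ⊆ W') :
    G.inducedEdgeSet W ⊆ G.inducedEdgeSet W' :=
  fun _ he => ⟨he.1, fun x hx => hW (he.2 x hx)⟩

lemma inducedEdgeSet_subset_deleteVertex_E {W : Set α} {u : α} (hu : u ∉ W) :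
    G.inducedEdgeSet W ⊆ (G.deleteVertex u).E :=
  fun _ he => ⟨he.1, fun x hx hxu => hu (mem_singleton_iff.1 hxu ▸ he.2 x hx)⟩

lemma inducedEdgeSet_componentOf (G : Graph α β) (v : α) :
    G.inducedEdgeSet (G.componentOf v).V = (G.componentOf v).E :=
  Set.ext fun _ => ⟨fun he => ⟨he.1, fun x hx => (he.2 x hx).2⟩,
    fun he => ⟨he.1, fun x hx => ⟨G.ends_mem he.1 hx, he.2 x hx⟩⟩⟩

lemma restrictEdges_inducedEdgeSet (G : Graph α β) (X : Set β) (W : Set α) :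
    (G.restrictEdges X).inducedEdgeSet W = X ∩ G.inducedEdgeSet W :=
  Set.ext fun _ => ⟨fun he => ⟨he.1.1, he.1.2, he.2⟩, fun he => ⟨⟨he.1, he.2.1⟩, he.2.2⟩⟩

lemma restrictEdges_V_subset (G : Graph α β) (X : Set β) : (G.restrictEdges X).V ⊆ G.V :=
  fun _ ⟨_, he, hv⟩ => G.ends_mem he.2 hv

lemma componentOf_restrictEdges_V_subset (G : Graph α β) (X : Set β) (v : α) :
    ((G.restrictEdges X).componentOf v).V ⊆ (G.componentOf v).V :=
  fun _ hu => ⟨G.restrictEdges_V_subset X hu.1,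
    Relation.ReflTransGen.mono (fun _ _ ⟨e, he, hends⟩ => ⟨e, he.2, hends⟩) _ _ hu.2⟩

lemma deleteVertex_restrictEdges_E (G : Graph α β) (X : Set β) (v : α) :
    ((G.restrictEdges X).deleteVertex v).E = X ∩ (G.deleteVertex v).E :=
  Set.ext fun _ => ⟨fun he => ⟨he.1.1, he.1.2, he.2⟩, fun he => ⟨⟨he.1, he.2.1⟩, he.2.2⟩⟩

lemma loopsAt_restrictEdges (G : Graph α β) (X : Set β) (v : α) :
    (G.restrictEdges X).loopsAt v = X ∩ G.loopsAt v :=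
  Set.ext fun _ => ⟨fun he => ⟨he.1.1, he.1.2, he.2⟩, fun he => ⟨⟨he.1, he.2.1⟩, he.2.2⟩⟩

end Graph

namespace WeakFramework

variable {G : Graph α β} {M : Matroid β}

lemma eRk_inducedEdgeSet_add_one_le (h : WeakFramework G M) {W : Set α} {w u : α}
    (hwu : G.Adj w u) (hw : w ∈ W) (hu : u ∉ W) :
    M.eRk (G.inducedEdgeSet W) + 1 ≤ M.eRk (G.inducedEdgeSet (insert u W)) := by
  obtain ⟨e, he, hends⟩ := hwu
  have hue : u ∈ G.ends e := hends ▸ Sym2.mem_mk_right w u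
  have hne : w ≠ u := fun hwu => hu (hwu ▸ hw)
  have hecl : e ∉ M.closure (G.inducedEdgeSet W) := by
    intro hcl
    rcases h.2.2 u (G.ends_mem he hue)
      (M.closure_subset_closure (Graph.inducedEdgeSet_subset_deleteVertex_E hu) hcl) with
      hdel | hloop
    · exact hdel.2 u hue rfl
    · have hdiag : s(w, u) = s(u, u) := hends ▸ hloop.2
      exact hne (Sym2.congr_left.1 hdiag)
  have heW : e ∈ G.inducedEdgeSet (insert u W) := by
    refine ⟨he, fun x hx => ?_⟩
    rw [hends, Sym2.mem_iff] at hx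
    rcases hx with rfl | rfl
    exacts [mem_insert_of_mem _ hw, mem_insert _ _]
  calc M.eRk (G.inducedEdgeSet W) + 1 = M.eRk (insert e (G.inducedEdgeSet W)) :=
        (eRk_insert_eq_add_one ⟨h.1 ▸ he, hecl⟩).symm
    _ ≤ M.eRk (G.inducedEdgeSet (insert u W)) :=
        M.eRk_mono (insert_subset heW (Graph.inducedEdgeSet_mono (subset_insert _ _)))

lemma eRk_inducedEdgeSet_add_ncard_le (h : WeakFramework G M) {v : α} {W : Set α} (hv : v ∈ W)
    (hW : W ⊆ (G.componentOf v).V) :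
    M.eRk (G.inducedEdgeSet W) + ((G.componentOf v).V \ W).ncard ≤
      M.eRk (G.componentOf v).E := by
  induction hn : ((G.componentOf v).V \ W).ncard generalizing W with
  | zero =>
    rw [Nat.cast_zero, add_zero, ← G.inducedEdgeSet_componentOf]
    exact M.eRk_mono (Graph.inducedEdgeSet_mono hW)
  | succ n ih =>
    obtain ⟨u, huK, huW⟩ : ((G.componentOf v).V \ W).Nonempty :=
      nonempty_of_ncard_ne_zero (by omega)
    obtain ⟨w, hw, x, hx, hwx⟩ := huK.2.exists_rel_mem_notMem hv huW
    have hxK : x ∈ (G.componentOf v).V := ⟨hwx.right_mem, (hW hw).2.tail hwx⟩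
    have hcard : ((G.componentOf v).V \ insert x W).ncard = n := by
      have hxKW : x ∈ (G.componentOf v).V \ W := ⟨hxK, hx⟩
      rw [← union_singleton, ← sdiff_sdiff, ncard_sdiff_singleton_of_mem hxKW, hn,
        Nat.add_sub_cancel]
    calc M.eRk (G.inducedEdgeSet W) + ↑(n + 1)
        = M.eRk (G.inducedEdgeSet W) + 1 + n := by push_cast; ring
      _ ≤ M.eRk (G.inducedEdgeSet (insert x W)) + n := by
        gcongr; exact h.eRk_inducedEdgeSet_add_one_le hwx hw hx
      _ ≤ M.eRk (G.componentOf v).E :=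
        ih (mem_insert_of_mem _ hv) (insert_subset hxK hW) hcard

lemma eRk_inducedEdgeSet_le_encard (h : WeakFramework G M) {v : α} {W : Set α} (hv : v ∈ W)
    (hW : W ⊆ (G.componentOf v).V) : M.eRk (G.inducedEdgeSet W) ≤ W.encard := by
  have hKfin : (G.componentOf v).V.Finite := (G.componentOf v).finV
  have hK : M.eRk (G.componentOf v).E ≤ (G.componentOf v).V.encard := by
    rw [← hKfin.cast_ncard_eq, ← rank_le_iff_eRk_le (G.componentOf v).finE]
    exact h.2.1 _ ⟨v, (hW hv).1, rfl⟩
  have hgrow := h.eRk_inducedEdgeSet_add_ncard_le hv hW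
  rw [hKfin.sdiff.cast_ncard_eq] at hgrow
  refine (ENat.add_le_add_iff_right (hKfin.sdiff (t := W)).encard_lt_top.ne).1 ?_
  calc _ ≤ _ := hgrow
    _ ≤ _ := hK
    _ = _ := (encard_sdiff_add_encard_of_subset hW).symm.trans (add_comm _ _)

end WeakFramework

/-- If `G` is a weak framework for a matroid `M` and `X ⊆ E(M)`, then
`G[X]` is a weak framework for the restriction `M|X`. -/
theorem statement7 {α : Type u} {β : Type v} (G : Graph α β) (M : Matroid β)
    (h : WeakFramework G M) (X : Set β) (hX : X ⊆ M.E) :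
    WeakFramework (G.restrictEdges X) (M ↾ X) := by
  refine ⟨inter_eq_left.2 (h.1 ▸ hX), ?_, fun v hv => ?_⟩
  · rintro H ⟨v, hv, rfl⟩
    set H := (G.restrictEdges X).componentOf v
    have hHE : H.E = X ∩ G.inducedEdgeSet H.V := by
      rw [← Graph.inducedEdgeSet_componentOf, Graph.restrictEdges_inducedEdgeSet]
    rw [rank_le_iff_eRk_le H.finE, restrict_eRk_eq _ (hHE ▸ inter_subset_left),
      H.finV.cast_ncard_eq]
    calc M.eRk H.E ≤ M.eRk (G.inducedEdgeSet H.V) := M.eRk_mono (hHE ▸ inter_subset_right)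
      _ ≤ H.V.encard :=
        h.eRk_inducedEdgeSet_le_encard ⟨hv, .refl⟩ (G.componentOf_restrictEdges_V_subset X v)
  · rw [Graph.deleteVertex_restrictEdges_E, restrict_closure_eq M inter_subset_left hX,
      Graph.loopsAt_restrictEdges, ← inter_union_distrib_left]
    rintro f ⟨hf, hfX⟩
    exact ⟨hfX, h.2.2 v (G.restrictEdges_V_subset X hv)
      (M.closure_subset_closure inter_subset_right hf)⟩

end QuasiGraphicPaper
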